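/- Let ρ be a density matrix and P_𝒜 an orthogonal projector with tr(P_𝒜 ρ) > 0, and set ρ_𝒜 = P_𝒜 ρ P_𝒜 / tr(P_𝒜 ρ). Then ‖ρ_𝒜 − ρ‖₁ ≥ 2 (1 − tr(P_𝒜 ρ)). -/

import Mathlib

/-!
With `p = tr(Pρ)`, the Hermitian matrix `Δ = p⁻¹ PρP - ρ` satisfies `tr Δ = 0` and
`tr(PΔ) = 1 - p`, hence `tr((2P - 1)Δ) = 2(1 - p)`. The reflection `2P - 1` is unitary, and
`Re tr(UΔ) ≤ ‖Δ‖₁` for every unitary `U`: diagonalising `Δ` reduces this to the fact that the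
diagonal entries of a unitary matrix have modulus at most `1`.
-/

open Matrix
open scoped ComplexOrder

/-- The trace norm (Schatten 1-norm) of a complex square matrix: `‖A‖₁ = tr √(AᴴA)`. -/
noncomputable def traceNorm {m : Type*} [Fintype m] [DecidableEq m] (A : Matrix m m ℂ) : ℝ :=
  (((Matrix.posSemidef_conjTranspose_mul_self A).1.eigenvectorUnitary : Matrix m m ℂ) *
    diagonal ((fun x : ℝ => (x : ℂ)) ∘ Real.sqrt ∘ (Matrix.posSemidef_conjTranspose_mul_self A).1.eigenvalues) *
    (star (Matrix.posSemidef_conjTranspose_mul_self A).1.eigenvectorUnitary : Matrix m m ℂ)).trace.re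

namespace Matrix

variable {n : Type*} [Fintype n]

lemma IsHermitian.coe_re_trace {A : Matrix n n ℂ} (hA : A.IsHermitian) :
    (A.trace.re : ℂ) = A.trace := by
  refine Complex.conj_eq_iff_re.mp ?_
  change star A.trace = A.trace
  rw [← trace_conjTranspose, hA.eq]

variable [DecidableEq n]

lemma IsHermitian.traceNorm_eq_sum_abs_eigenvalues {A : Matrix n n ℂ} (hA : A.IsHermitian) :
    traceNorm A = ∑ i, |hA.eigenvalues i| := by
  have hAA := (posSemidef_conjTranspose_mul_self A).1
  have h_cfc : traceNorm A = (hAA.cfc Real.sqrt).trace.re := by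
    rw [traceNorm, IsHermitian.cfc, Unitary.conjStarAlgAut_apply]; rfl
  have h_sq : Aᴴ * A = cfc (fun x : ℝ => x ^ 2) A := by
    rw [cfc_pow (fun x => x) 2 A (ha := hA.isSelfAdjoint), cfc_id' ℝ A, hA.eq, pow_two]
  have h_sqrt_sq : (Real.sqrt ∘ fun x : ℝ => x ^ 2) = fun x => |x| :=
    funext Real.sqrt_sq_eq_abs
  rw [h_cfc, ← hAA.cfc_eq, h_sq,
    ← cfc_comp Real.sqrt (fun x : ℝ => x ^ 2) A (ha := hA.isSelfAdjoint), h_sqrt_sq,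
    hA.cfc_eq, IsHermitian.cfc]
  simp only [Unitary.conjStarAlgAut_apply]
  rw [trace_mul_cycle, Unitary.coe_star_mul_self, one_mul, trace_diagonal]
  simp [Complex.re_sum]

lemma re_trace_mul_diagonal_le_sum_norm {U : Matrix n n ℂ} (hU : U ∈ unitaryGroup n ℂ)
    (c : n → ℂ) : (U * diagonal c).trace.re ≤ ∑ i, ‖c i‖ := by
  simp only [trace, diag, mul_diagonal, Complex.re_sum]
  refine Finset.sum_le_sum fun i _ => ?_
  calc (U i i * c i).re ≤ ‖U i i‖ * ‖c i‖ :=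
        (Complex.re_le_norm _).trans (norm_mul _ _).le
    _ ≤ ‖c i‖ := mul_le_of_le_one_left (norm_nonneg _) (entry_norm_bound_of_unitary hU i i)

lemma re_trace_unitary_mul_le_traceNorm {U A : Matrix n n ℂ} (hU : U ∈ unitaryGroup n ℂ)
    (hA : A.IsHermitian) : (U * A).trace.re ≤ traceNorm A := by
  set V : Matrix n n ℂ := (hA.eigenvectorUnitary : Matrix n n ℂ)
  have hVUV : star V * U * V ∈ unitaryGroup n ℂ :=
    mul_mem (mul_mem (Unitary.star_mem hA.eigenvectorUnitary.2) hU) hA.eigenvectorUnitary.2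
  have h_diag :
      (U * A).trace = (star V * U * V * diagonal (RCLike.ofReal ∘ hA.eigenvalues)).trace := by
    conv_lhs => rw [hA.spectral_theorem, Unitary.conjStarAlgAut_apply]
    rw [← Matrix.mul_assoc, ← Matrix.mul_assoc, trace_mul_cycle, ← Matrix.mul_assoc]
  rw [h_diag, hA.traceNorm_eq_sum_abs_eigenvalues]
  simpa [Complex.norm_real] using
    re_trace_mul_diagonal_le_sum_norm hVUV (Complex.ofReal ∘ hA.eigenvalues)

lemma two_smul_sub_one_mem_unitaryGroup {P : Matrix n n ℂ} (hP_herm : Pᴴ = P)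
    (hP_idem : P * P = P) : (2 • P - 1) ∈ unitaryGroup n ℂ := by
  have h_self : star (2 • P - 1) = 2 • P - 1 := by
    rw [star_sub, star_nsmul, star_one, star_eq_conjTranspose, hP_herm]
  refine mem_unitaryGroup_iff.mpr ?_
  rw [h_self]
  simp only [sub_mul, mul_sub, smul_mul_assoc, mul_smul_comm, hP_idem, mul_one, one_mul]
  module

end Matrix

/-- For a density matrix `ρ` and an orthogonal projector `P_𝒜` with `tr(P_𝒜 ρ) > 0`, the
projected state `ρ_𝒜 = P_𝒜 ρ P_𝒜 / tr(P_𝒜 ρ)` satisfies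
`‖ρ_𝒜 − ρ‖₁ ≥ 2 (1 − tr(P_𝒜 ρ))`. -/
theorem traceNorm_projected_state_sub_ge {d : ℕ}
    (ρ PA : Matrix (Fin d) (Fin d) ℂ)
    (hρ : ρ.PosSemidef) (hρtr : ρ.trace = 1)
    (hPA_herm : PAᴴ = PA) (hPA_idem : PA * PA = PA)
    (htrA : 0 < (PA * ρ).trace.re) :
    2 * (1 - (PA * ρ).trace.re)
      ≤ traceNorm (((PA * ρ).trace.re)⁻¹ • (PA * ρ * PA) - ρ) := by
  set p := (PA * ρ).trace.re
  have hσ_herm : (PA * ρ * PA).IsHermitian := by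
    simpa only [hPA_herm] using isHermitian_mul_mul_conjTranspose PA hρ.1
  have hσ_trace : (PA * ρ * PA).trace = (PA * ρ).trace := by
    rw [trace_mul_cycle, hPA_idem]
  have hPρ_trace : (PA * ρ).trace = p := by
    simpa only [hσ_trace] using hσ_herm.coe_re_trace.symm
  have hPσ_trace : (PA * (PA * ρ * PA)).trace = p := by
    rw [← Matrix.mul_assoc, ← Matrix.mul_assoc, hPA_idem, hσ_trace, hPρ_trace]
  have hp : (p : ℂ) ≠ 0 := Complex.ofReal_ne_zero.mpr htrA.ne'
  have h_trace :
      ((2 • PA - 1) * (p⁻¹ • (PA * ρ * PA) - ρ)).trace = 2 * (1 - (p : ℂ)) := by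
    simp only [sub_mul, mul_sub, smul_mul_assoc, mul_smul_comm, one_mul, trace_sub, trace_smul,
      hσ_trace, hPρ_trace, hPσ_trace, hρtr, Complex.real_smul, Complex.ofReal_inv]
    field_simp
    ring
  calc 2 * (1 - p) = ((2 • PA - 1) * (p⁻¹ • (PA * ρ * PA) - ρ)).trace.re := by
        rw [h_trace]; simp
    _ ≤ _ :=
      re_trace_unitary_mul_le_traceNorm (two_smul_sub_one_mem_unitaryGroup hPA_herm hPA_idem)
        ((hσ_herm.smul (IsSelfAdjoint.all _)).sub hρ.1)
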